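/- Suppose k·α ≤ 1 and (2k−1)·α > 1, let λ > 0, let μ > k·p·r/(1−p), and let η₂ ∈ (0,1) satisfy ((2k−1)α − 1)/(2(k−1)α) − μ·η₂^{k−1} > 0. For each n define Φ_c(z) = Γ(n+1)/(Γ(z+1)·Γ(n−z+1)) · (1/d)^z · (1−1/d)^{n−z} · f_n(z/n)^{r·m} for z ∈ [0,n], where Γ is the Gamma function. Then Φ_c(S) = Φ_n(S) for every integer S ∈ {1,…,n}, and for all sufficiently large n the derivative satisfies Φ_c′(z) < 0 for every z ∈ (n·η₁(n), n·η₂). -/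

import Mathlib

open Filter Finset

/-- Domain size `d = n^α` of Model RB. -/
noncomputable def dRB (α : ℝ) (n : ℕ) : ℝ := (n : ℝ) ^ α

/-- `m = n · ln d`. -/
noncomputable def mRB (α : ℝ) (n : ℕ) : ℝ := (n : ℝ) * Real.log (dRB α n)

/-- `f_n(s) = 1 + (p/(1-p)) (s^k - d^{-k})/(1 - d^{-k})`. -/
noncomputable def fRB (α p : ℝ) (k n : ℕ) (s : ℝ) : ℝ :=
  1 + (p / (1 - p)) * (s ^ k - dRB α n ^ (-(k : ℝ))) / (1 - dRB α n ^ (-(k : ℝ)))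

/-- `B_n(S) = C(n,S) (1/d)^S (1-1/d)^{n-S}`. -/
noncomputable def BRB (α : ℝ) (n S : ℕ) : ℝ :=
  (n.choose S : ℝ) * (1 / dRB α n) ^ S * (1 - 1 / dRB α n) ^ (n - S)

/-- `W_n(S) = f_n(S/n)^{r m}`. -/
noncomputable def WRB (α p r : ℝ) (k n S : ℕ) : ℝ :=
  fRB α p k n ((S : ℝ) / (n : ℝ)) ^ (r * mRB α n)

/-- `Φ_n(S) = B_n(S) W_n(S)`. -/
noncomputable def PhiRB (α p r : ℝ) (k n S : ℕ) : ℝ := BRB α n S * WRB α p r k n S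

/-- `g(s) = -k(k-1)(1-s)s^{k-1}/2`. -/
noncomputable def gRB (k : ℕ) (s : ℝ) : ℝ :=
  -((k : ℝ) * ((k : ℝ) - 1)) * (1 - s) * s ^ (k - 1) / 2

/-- `η₁(n) = 1/d + λ/(n^{1-(k-1)α} ln d)`. -/
noncomputable def eta1 (α lam : ℝ) (k n : ℕ) : ℝ :=
  1 / dRB α n + lam / ((n : ℝ) ^ (1 - ((k : ℝ) - 1) * α) * Real.log (dRB α n))

/-- First moment `E[X] = d^n (1-p)^{r m}`. -/
noncomputable def E1RB (α p r : ℝ) (n : ℕ) : ℝ := dRB α n ^ n * (1 - p) ^ (r * mRB α n)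

/-- Second moment `E[X²]`. -/
noncomputable def E2RB (α p r : ℝ) (k n : ℕ) : ℝ :=
  ∑ S ∈ Finset.range (n + 1),
    dRB α n ^ n * (n.choose S : ℝ) * (dRB α n - 1) ^ (n - S) *
      ((1 - p) * ((S.choose k : ℝ) / (n.choose k : ℝ)) +
        ((1 - p) ^ 2 - p * (1 - p) * dRB α n ^ (-(k : ℝ)) / (1 - dRB α n ^ (-(k : ℝ)))) *
          (1 - (S.choose k : ℝ) / (n.choose k : ℝ))) ^ (r * mRB α n)

/-- Continuous interpolation Φ_c of Φ_n via the Gamma function. -/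
noncomputable def PhiC (α p r : ℝ) (k n : ℕ) (z : ℝ) : ℝ :=
  Real.Gamma ((n : ℝ) + 1) / (Real.Gamma (z + 1) * Real.Gamma ((n : ℝ) - z + 1)) *
    (1 / dRB α n) ^ z * (1 - 1 / dRB α n) ^ ((n : ℝ) - z) *
    fRB α p k n (z / n) ^ (r * mRB α n)

/-!
For `0 < z < n` with `z / n ≥ 1 / d` we have `Φ_c = exp ∘ H` with
`H z = log Γ(n+1) - log Γ(z+1) - log Γ(n-z+1) + z log(1/d) + (n-z) log(1-1/d) + r m log f_n(z/n)`.
Convexity of `log Γ` gives `log x ≤ ψ(x+1)` and `ψ x ≤ log x` for `ψ = (log Γ)'`, and `f_n ≥ 1`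
on `[1/d, 1]`; so as soon as `k p r / ((1-p)(1-d^{-k})) ≤ μ`, which holds for large `n`,
`H' z ≤ Q(z/n)` with `Q s = 2/n - log d - log s + μ (log d) s^{k-1}`.
Since `Q` is convex on `s > 0`, it suffices that `Q η₁ < 0` and `Q η₂ < 0`. At `η₂` this holds for
large `n` because `μ η₂^{k-1} < 1`. At `η₁` we have `d η₁ = 1 + u` with `u = λ n^{kα-1} / log d`
in `(0, 1]`, so `-log (d η₁) ≤ -2u/3`, while `2/n` and `μ (log d) (2/d)^{k-1}` are `o(u)`: the
first because `kα > 0`, the second because `(2k-1)α > 1`.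
-/

open Real Set

lemma differentiableAt_log_Gamma {x : ℝ} (hx : 0 < x) : DifferentiableAt ℝ (log ∘ Gamma) x :=
  (differentiableAt_Gamma fun m => ((neg_nonpos.2 m.cast_nonneg).trans_lt hx).ne').log
    (Gamma_pos_of_pos hx).ne'

lemma log_Gamma_add_one {x : ℝ} (hx : 0 < x) : log (Gamma (x + 1)) = log x + log (Gamma x) := by
  rw [Gamma_add_one hx.ne', log_mul hx.ne' (Gamma_pos_of_pos hx).ne']

lemma deriv_log_Gamma_le_log {x : ℝ} (hx : 0 < x) : deriv (log ∘ Gamma) x ≤ log x := by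
  have h := convexOn_log_Gamma.deriv_le_slope (mem_Ioi.2 hx) (mem_Ioi.2 (by linarith))
    (lt_add_one x) (differentiableAt_log_Gamma hx)
  rwa [slope_def_field, add_sub_cancel_left, div_one, Function.comp_apply, Function.comp_apply,
    log_Gamma_add_one hx, add_sub_cancel_right] at h

lemma log_le_deriv_log_Gamma_add_one {x : ℝ} (hx : 0 < x) :
    log x ≤ deriv (log ∘ Gamma) (x + 1) := by
  have h := convexOn_log_Gamma.slope_le_deriv (mem_Ioi.2 hx) (mem_Ioi.2 (by linarith))
    (lt_add_one x) (differentiableAt_log_Gamma (by linarith))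
  rwa [slope_def_field, add_sub_cancel_left, div_one, Function.comp_apply, Function.comp_apply,
    log_Gamma_add_one hx, add_sub_cancel_right] at h

lemma log_sub_log_one_sub_inv_le {N d z : ℝ} (hN : 0 < N) (hd : 2 ≤ d) (hzd : 1 / d ≤ z / N)
    (hzN : z < N) : log (N - z + 1) - log (1 - 1 / d) ≤ log N + 2 / N := by
  rw [div_le_div_iff₀ (by linarith) hN, one_mul] at hzd
  have hq : 1 / 2 ≤ 1 - 1 / d := by
    have : 1 / d ≤ 1 / 2 := one_div_le_one_div_of_le two_pos hd
    linarith
  have hpos : 0 < (N - z + 1) / (N * (1 - 1 / d)) := by positivity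
  calc log (N - z + 1) - log (1 - 1 / d)
      = log N + log ((N - z + 1) / (N * (1 - 1 / d))) := by
        rw [log_div (by linarith) (by positivity), log_mul hN.ne' (by linarith)]; ring
    _ ≤ log N + ((N - z + 1) / (N * (1 - 1 / d)) - 1) := by gcongr; exact log_le_sub_one_of_pos hpos
    _ ≤ log N + 2 / N := by
        gcongr
        rw [div_sub_one (by positivity), div_le_div_iff₀ (by positivity) hN]
        field_simp
        linarith

section ModelRB

variable {α p r : ℝ} {k n : ℕ}

lemma PhiC_natCast {S : ℕ} (hSn : S ≤ n) : PhiC α p r k n S = PhiRB α p r k n S := by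
  have hsub : (n : ℝ) - S = ((n - S : ℕ) : ℝ) := (Nat.cast_sub hSn).symm
  rw [PhiC, PhiRB, BRB, WRB, hsub, Gamma_nat_eq_factorial, Gamma_nat_eq_factorial,
    Gamma_nat_eq_factorial, rpow_natCast, rpow_natCast, Nat.cast_choose ℝ hSn]

lemma one_le_fRB (hp0 : 0 ≤ p) (hp1 : p < 1) (hd : 1 ≤ dRB α n) {s : ℝ}
    (hs : 1 / dRB α n ≤ s) : 1 ≤ fRB α p k n s := by
  have hδ : dRB α n ^ (-(k : ℝ)) = (1 / dRB α n) ^ k := by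
    rw [rpow_neg (by linarith), rpow_natCast, one_div, inv_pow]
  have hδ1 : dRB α n ^ (-(k : ℝ)) ≤ 1 := rpow_le_one_of_one_le_of_nonpos hd (by simp)
  have hsk : (1 / dRB α n) ^ k ≤ s ^ k :=
    pow_le_pow_left₀ (div_nonneg zero_le_one (by linarith)) hs k
  have : 0 ≤ p / (1 - p) * (s ^ k - dRB α n ^ (-(k : ℝ))) / (1 - dRB α n ^ (-(k : ℝ))) :=
    div_nonneg (mul_nonneg (div_nonneg hp0 (by linarith)) (by linarith)) (by linarith)
  rw [fRB]
  linarith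

lemma hasDerivAt_fRB (s : ℝ) :
    HasDerivAt (fRB α p k n)
      (p / (1 - p) * (k * s ^ (k - 1)) / (1 - dRB α n ^ (-(k : ℝ)))) s :=
  ((((hasDerivAt_pow k s).sub_const _).const_mul _).div_const _).const_add 1

noncomputable def logPhiC (α p r : ℝ) (k n : ℕ) (z : ℝ) : ℝ :=
  log (Gamma (n + 1)) - log (Gamma (z + 1)) - log (Gamma (n - z + 1)) +
    z * log (1 / dRB α n) + (n - z) * log (1 - 1 / dRB α n) +
    r * mRB α n * log (fRB α p k n (z / n))

noncomputable def derivLogPhiC (α p r : ℝ) (k n : ℕ) (z : ℝ) : ℝ :=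
  deriv (log ∘ Gamma) (n - z + 1) - deriv (log ∘ Gamma) (z + 1) + log (1 / dRB α n) -
    log (1 - 1 / dRB α n) +
    r * mRB α n * (p / (1 - p) * (k * (z / n) ^ (k - 1)) / (1 - dRB α n ^ (-(k : ℝ))) / n) /
      fRB α p k n (z / n)

lemma PhiC_eq_exp_logPhiC (hp0 : 0 ≤ p) (hp1 : p < 1) (hd : 1 < dRB α n) {z : ℝ} (hz0 : 0 < z)
    (hzn : z < n) (hzd : 1 / dRB α n ≤ z / n) : PhiC α p r k n z = exp (logPhiC α p r k n z) := by
  have h1d : 0 < 1 / dRB α n := one_div_pos.2 (by linarith)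
  have hq : 0 < 1 - 1 / dRB α n := by rw [sub_pos, div_lt_one (by linarith)]; exact hd
  have hf : 0 < fRB α p k n (z / n) := one_pos.trans_le (one_le_fRB hp0 hp1 hd.le hzd)
  rw [PhiC, logPhiC, exp_add, exp_add, exp_add, exp_sub, exp_sub,
    exp_log (Gamma_pos_of_pos (by positivity)), exp_log (Gamma_pos_of_pos (by linarith)),
    exp_log (Gamma_pos_of_pos (by linarith)), mul_comm z, ← rpow_def_of_pos h1d,
    mul_comm ((n : ℝ) - z), ← rpow_def_of_pos hq, mul_comm (r * mRB α n), ← rpow_def_of_pos hf]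
  ring

lemma hasDerivAt_logPhiC (hp0 : 0 ≤ p) (hp1 : p < 1) (hd : 1 ≤ dRB α n) {z : ℝ} (hz0 : 0 < z)
    (hzn : z < n) (hzd : 1 / dRB α n ≤ z / n) :
    HasDerivAt (logPhiC α p r k n) (derivLogPhiC α p r k n z) z := by
  have hψ {x : ℝ} (hx : 0 < x) : HasDerivAt (log ∘ Gamma) (deriv (log ∘ Gamma) x) x :=
    (differentiableAt_log_Gamma hx).hasDerivAt
  have hΓ₁ := (hψ (by linarith : 0 < z + 1)).comp z ((hasDerivAt_id z).add_const 1)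
  have hΓ₂ := (hψ (by linarith : 0 < n - z + 1)).comp z
    (((hasDerivAt_id z).const_sub (n : ℝ)).add_const 1)
  have hf : HasDerivAt (fun w => fRB α p k n (w / n))
      (p / (1 - p) * (k * (z / n) ^ (k - 1)) / (1 - dRB α n ^ (-(k : ℝ))) * (1 / n)) z :=
    HasDerivAt.comp (h₂ := fRB α p k n) z (hasDerivAt_fRB _)
      ((hasDerivAt_id' z).div_const (n : ℝ))
  have hlogf := hf.log (one_pos.trans_le (one_le_fRB hp0 hp1 hd hzd)).ne'
  have h := (((((hasDerivAt_const z (log (Gamma (n + 1)))).sub hΓ₁).sub hΓ₂).add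
    ((hasDerivAt_id z).mul_const (log (1 / dRB α n)))).add
    (((hasDerivAt_id z).const_sub (n : ℝ)).mul_const (log (1 - 1 / dRB α n)))).add
    (hlogf.const_mul (r * mRB α n))
  refine h.congr_deriv ?_
  simp only [derivLogPhiC]
  ring

end ModelRB

section Majorant

variable {α p r mu : ℝ} {k n : ℕ}

noncomputable def derivMajorant (α mu : ℝ) (k n : ℕ) (s : ℝ) : ℝ :=
  2 / n - log (dRB α n) - log s + mu * log (dRB α n) * s ^ (k - 1)

lemma convexOn_derivMajorant (hmu : 0 ≤ mu * log (dRB α n)) :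
    ConvexOn ℝ (Ioi 0) (derivMajorant α mu k n) := by
  have hlog : ConvexOn ℝ (Ioi 0) fun s : ℝ => -log s := strictConcaveOn_log_Ioi.concaveOn.neg
  have hpow : ConvexOn ℝ (Ioi 0) fun s : ℝ => mu * log (dRB α n) * s ^ (k - 1) :=
    ((convexOn_pow (k - 1)).subset Ioi_subset_Ici_self (convex_Ioi 0)).smul hmu
  refine ((hlog.add hpow).add_const (2 / n - log (dRB α n))).congr fun s _ => ?_
  simp only [derivMajorant, Pi.add_apply]
  ring

lemma mRB_mul_deriv_div_fRB_le (hp0 : 0 ≤ p) (hp1 : p < 1) (hr0 : 0 ≤ r)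
    (hd : 1 ≤ dRB α n) (hn : 0 < n)
    (hmu : k * p * r / (1 - p) / (1 - dRB α n ^ (-(k : ℝ))) ≤ mu) {s : ℝ}
    (hs : 1 / dRB α n ≤ s) :
    r * mRB α n * (p / (1 - p) * (k * s ^ (k - 1)) / (1 - dRB α n ^ (-(k : ℝ))) / n) /
      fRB α p k n s ≤ mu * log (dRB α n) * s ^ (k - 1) := by
  have hδ : dRB α n ^ (-(k : ℝ)) ≤ 1 := rpow_le_one_of_one_le_of_nonpos hd (by simp)
  have hc : 0 ≤ k * p * r / (1 - p) / (1 - dRB α n ^ (-(k : ℝ))) :=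
    div_nonneg (div_nonneg (by positivity) (by linarith)) (by linarith)
  have hLs : 0 ≤ log (dRB α n) * s ^ (k - 1) :=
    mul_nonneg (log_nonneg hd) (pow_nonneg ((div_nonneg zero_le_one (by linarith)).trans hs) _)
  calc r * mRB α n * (p / (1 - p) * (k * s ^ (k - 1)) / (1 - dRB α n ^ (-(k : ℝ))) / n) /
        fRB α p k n s
      = k * p * r / (1 - p) / (1 - dRB α n ^ (-(k : ℝ))) * (log (dRB α n) * s ^ (k - 1)) /
          fRB α p k n s := by
        have : (n : ℝ) ≠ 0 := by positivity
        rw [mRB]; field_simp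
    _ ≤ k * p * r / (1 - p) / (1 - dRB α n ^ (-(k : ℝ))) * (log (dRB α n) * s ^ (k - 1)) :=
        div_le_self (mul_nonneg hc hLs) (one_le_fRB hp0 hp1 hd hs)
    _ ≤ mu * log (dRB α n) * s ^ (k - 1) := by
        rw [mul_assoc mu]; exact mul_le_mul_of_nonneg_right hmu hLs

lemma derivLogPhiC_le_derivMajorant (hp0 : 0 ≤ p) (hp1 : p < 1) (hr0 : 0 ≤ r)
    (hd : 2 ≤ dRB α n) (hmu : k * p * r / (1 - p) / (1 - dRB α n ^ (-(k : ℝ))) ≤ mu)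
    {z : ℝ} (hz0 : 0 < z) (hzn : z < n) (hzd : 1 / dRB α n ≤ z / n) :
    derivLogPhiC α p r k n z ≤ derivMajorant α mu k n (z / n) := by
  have hn : (0 : ℝ) < n := hz0.trans hzn
  have hψ₁ := deriv_log_Gamma_le_log (x := n - z + 1) (by linarith)
  have hψ₂ := log_le_deriv_log_Gamma_add_one hz0
  have hlog := log_sub_log_one_sub_inv_le hn hd hzd hzn
  have hf := mRB_mul_deriv_div_fRB_le hp0 hp1 hr0 (by linarith) (by exact_mod_cast hn) hmu hzd
  have hzn' : log (z / n) = log z - log n := log_div hz0.ne' hn.ne'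
  have h1d : log (1 / dRB α n) = -log (dRB α n) := by rw [one_div, log_inv]
  rw [derivLogPhiC, derivMajorant, h1d, hzn']
  linarith

lemma deriv_PhiC_neg (hp0 : 0 ≤ p) (hp1 : p < 1) (hr0 : 0 ≤ r) (hmu0 : 0 ≤ mu)
    (hd : 2 ≤ dRB α n) (hmu : k * p * r / (1 - p) / (1 - dRB α n ^ (-(k : ℝ))) ≤ mu)
    {a b : ℝ} (ha : 1 / dRB α n ≤ a) (hb : b ≤ 1)
    (hQa : derivMajorant α mu k n a < 0) (hQb : derivMajorant α mu k n b < 0)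
    {z : ℝ} (hz : z ∈ Ioo (n * a) (n * b)) : deriv (PhiC α p r k n) z < 0 := by
  have hd0 : 0 < dRB α n := by linarith
  have ha0 : 0 < a := (one_div_pos.2 hd0).trans_le ha
  have hn : (0 : ℝ) < n := by
    rcases n.eq_zero_or_pos with rfl | hn
    · simp at hz
    · exact_mod_cast hn
  have hmem {w : ℝ} (hw : w ∈ Ioo (n * a) (n * b)) :
      0 < w ∧ w < n ∧ 1 / dRB α n ≤ w / n ∧ w / n ∈ Icc a b := by
    have h₁ : a < w / n := by rw [lt_div_iff₀ hn, mul_comm]; exact hw.1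
    have h₂ : w / n < b := by rw [div_lt_iff₀ hn, mul_comm]; exact hw.2
    refine ⟨by nlinarith [hw.1], ?_, ha.trans h₁.le, h₁.le, h₂.le⟩
    rw [div_lt_iff₀ hn] at h₂; nlinarith
  obtain ⟨hz0, hzn, hzd, hzab⟩ := hmem hz
  have hexp : PhiC α p r k n =ᶠ[nhds z] fun w => exp (logPhiC α p r k n w) := by
    filter_upwards [isOpen_Ioo.mem_nhds hz] with w hw
    obtain ⟨hw0, hwn, hwd, -⟩ := hmem hw
    exact PhiC_eq_exp_logPhiC hp0 hp1 (by linarith) hw0 hwn hwd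
  rw [hexp.deriv_eq, (hasDerivAt_logPhiC hp0 hp1 (by linarith) hz0 hzn hzd).exp.deriv]
  refine mul_neg_of_pos_of_neg (exp_pos _) ?_
  have hconv := convexOn_derivMajorant (k := k)
    (mul_nonneg hmu0 (log_nonneg (by linarith : (1 : ℝ) ≤ dRB α n)))
  calc derivLogPhiC α p r k n z ≤ derivMajorant α mu k n (z / n) :=
        derivLogPhiC_le_derivMajorant hp0 hp1 hr0 hd hmu hz0 hzn hzd
    _ ≤ max (derivMajorant α mu k n a) (derivMajorant α mu k n b) :=
        hconv.le_max_of_mem_Icc ha0 (ha0.trans_le (hzab.1.trans hzab.2)) hzab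
    _ < 0 := max_lt hQa hQb

end Majorant

section Asymptotics

variable {α lam mu : ℝ} {k : ℕ}

lemma tendsto_dRB_atTop (hα : 0 < α) : Tendsto (dRB α) atTop atTop :=
  (tendsto_rpow_atTop hα).comp tendsto_natCast_atTop_atTop

lemma tendsto_log_dRB_atTop (hα : 0 < α) : Tendsto (fun n => log (dRB α n)) atTop atTop :=
  tendsto_log_atTop.comp (tendsto_dRB_atTop hα)

lemma eventually_div_one_sub_dRB_rpow_le {c : ℝ} (hα : 0 < α) (hk : k ≠ 0) (hc : c < mu) :
    ∀ᶠ n in atTop, c / (1 - dRB α n ^ (-(k : ℝ))) ≤ mu := by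
  have hδ : Tendsto (fun n => dRB α n ^ (-(k : ℝ))) atTop (nhds 0) :=
    (tendsto_rpow_neg_atTop (by positivity)).comp (tendsto_dRB_atTop hα)
  have h : Tendsto (fun n => c / (1 - dRB α n ^ (-(k : ℝ)))) atTop (nhds (c / (1 - 0))) :=
    tendsto_const_nhds.div (tendsto_const_nhds.sub hδ) (by norm_num)
  exact h.eventually (eventually_le_nhds (by rwa [sub_zero, div_one]))

lemma eventually_derivMajorant_neg (hα : 0 < α) {η : ℝ}
    (hμη : mu * η ^ (k - 1) < 1) : ∀ᶠ n : ℕ in atTop, derivMajorant α mu k n η < 0 := by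
  filter_upwards [(tendsto_log_dRB_atTop hα).eventually_gt_atTop
    ((2 - log η) / (1 - mu * η ^ (k - 1))), eventually_ge_atTop 1] with n hL hn
  have h2n : 2 / (n : ℝ) ≤ 2 := div_le_self zero_le_two (by exact_mod_cast hn)
  rw [div_lt_iff₀ (by linarith)] at hL
  rw [derivMajorant]
  linarith

lemma eventually_mul_log_dRB_pow_lt (C : ℝ) (e : ℕ) {β : ℝ} (hβ : 0 < β) :
    ∀ᶠ n : ℕ in atTop, C * log (dRB α n) ^ e < (n : ℝ) ^ β := by
  have h := ((isLittleO_log_rpow_rpow_atTop (e : ℝ) hβ).const_mul_left (C * α ^ e)).def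
    one_half_pos
  filter_upwards [tendsto_natCast_atTop_atTop.eventually (h.and (eventually_gt_atTop 0))]
    with n ⟨hn, hn0⟩
  have hpos : 0 < (n : ℝ) ^ β := rpow_pos_of_pos hn0 β
  rw [norm_of_nonneg hpos.le, rpow_natCast] at hn
  calc C * log (dRB α n) ^ e = C * α ^ e * log n ^ e := by rw [dRB, log_rpow hn0]; ring
    _ ≤ ‖C * α ^ e * log n ^ e‖ := le_norm_self _
    _ < (n : ℝ) ^ β := by linarith

end Asymptotics

section Eta1

variable {α lam mu : ℝ} {k : ℕ}

noncomputable def eta1Excess (α lam : ℝ) (k n : ℕ) : ℝ :=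
  lam * (n : ℝ) ^ ((k : ℝ) * α - 1) / log (dRB α n)

lemma one_div_dRB_le_eta1 {n : ℕ} (hlam : 0 ≤ lam) (hd : 1 ≤ dRB α n) :
    1 / dRB α n ≤ eta1 α lam k n :=
  le_add_of_nonneg_right (div_nonneg hlam (mul_nonneg (rpow_nonneg n.cast_nonneg _)
    (log_nonneg hd)))

lemma dRB_mul_eta1 {n : ℕ} (hn : 0 < n) :
    dRB α n * eta1 α lam k n = 1 + eta1Excess α lam k n := by
  have hn' : (0 : ℝ) < n := by exact_mod_cast hn
  have hd : dRB α n / (n : ℝ) ^ (1 - ((k : ℝ) - 1) * α) = (n : ℝ) ^ ((k : ℝ) * α - 1) := by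
    rw [dRB, ← rpow_sub hn']; ring_nf
  have hd0 : dRB α n ≠ 0 := (rpow_pos_of_pos hn' α).ne'
  rw [eta1, eta1Excess, mul_add, mul_one_div_cancel hd0, ← hd]
  ring

lemma derivMajorant_eta1_neg {n : ℕ} (hn : 0 < n) (hd : 1 ≤ dRB α n) (hmu0 : 0 ≤ mu)
    (hu0 : 0 < eta1Excess α lam k n) (hu1 : eta1Excess α lam k n ≤ 1)
    (h2n : 2 / n < eta1Excess α lam k n / 4)
    (hpow : mu * log (dRB α n) * (2 / dRB α n) ^ (k - 1) ≤ eta1Excess α lam k n / 4) :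
    derivMajorant α mu k n (eta1 α lam k n) < 0 := by
  set u := eta1Excess α lam k n
  have hd0 : 0 < dRB α n := by linarith
  have hdη := dRB_mul_eta1 (α := α) (lam := lam) (k := k) hn
  have hη : eta1 α lam k n = (1 + u) / dRB α n := by rw [← hdη]; field_simp
  have hη0 : 0 < eta1 α lam k n := by rw [hη]; positivity
  have hlog : 2 * u / 3 ≤ log (dRB α n) + log (eta1 α lam k n) := by
    rw [← log_mul hd0.ne' hη0.ne', hdη]
    calc 2 * u / 3 ≤ 2 * u / (u + 2) := by gcongr; linarith
      _ ≤ log (1 + u) := le_log_one_add_of_nonneg hu0.le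
  have hη2 : eta1 α lam k n ^ (k - 1) ≤ (2 / dRB α n) ^ (k - 1) := by
    rw [hη]; gcongr; linarith
  have hterm := mul_le_mul_of_nonneg_left hη2 (mul_nonneg hmu0 (log_nonneg hd))
  rw [derivMajorant]
  linarith

lemma eventually_eta1Excess_mem_Ioc (hα : 0 < α) (hkα : k * α ≤ 1) (hlam : 0 < lam) :
    ∀ᶠ n : ℕ in atTop, eta1Excess α lam k n ∈ Set.Ioc 0 1 := by
  filter_upwards [(tendsto_log_dRB_atTop hα).eventually_ge_atTop lam, eventually_ge_atTop 1]
    with n hL hn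
  have hn' : (1 : ℝ) ≤ n := by exact_mod_cast hn
  have hpow : (n : ℝ) ^ ((k : ℝ) * α - 1) ≤ 1 := rpow_le_one_of_one_le_of_nonpos hn' (by linarith)
  have hpos : 0 < (n : ℝ) ^ ((k : ℝ) * α - 1) := rpow_pos_of_pos (by linarith) _
  refine ⟨by rw [eta1Excess]; exact div_pos (mul_pos hlam hpos) (hlam.trans_le hL), ?_⟩
  rw [eta1Excess, div_le_one (hlam.trans_le hL)]
  nlinarith

lemma eventually_two_div_lt_eta1Excess (hα : 0 < α) (hk : k ≠ 0) (hlam : 0 < lam) :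
    ∀ᶠ n : ℕ in atTop, 2 / n < eta1Excess α lam k n / 4 := by
  have hkα : 0 < (k : ℝ) * α := by positivity
  filter_upwards [eventually_mul_log_dRB_pow_lt (8 / lam) 1 hkα,
    (tendsto_log_dRB_atTop hα).eventually_gt_atTop 0, eventually_gt_atTop 0] with n h hL hn
  have hn' : (0 : ℝ) < n := by exact_mod_cast hn
  rw [pow_one, div_mul_eq_mul_div, div_lt_iff₀ hlam] at h
  rw [eta1Excess, div_div, div_lt_div_iff₀ hn' (by positivity), mul_assoc lam,
    ← rpow_add_one hn'.ne', sub_add_cancel]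
  linarith

lemma eventually_mul_log_mul_two_div_pow_le_eta1Excess (hα : 0 < α) (hk : 1 ≤ k)
    (hkα : 1 < (2 * k - 1) * α) (hlam : 0 < lam) :
    ∀ᶠ n : ℕ in atTop,
      mu * log (dRB α n) * (2 / dRB α n) ^ (k - 1) ≤ eta1Excess α lam k n / 4 := by
  filter_upwards [eventually_mul_log_dRB_pow_lt (α := α) (4 * mu * 2 ^ (k - 1) / lam) 2
    (sub_pos.2 hkα), (tendsto_log_dRB_atTop hα).eventually_gt_atTop 0, eventually_gt_atTop 0]
    with n h hL hn
  have hn' : (0 : ℝ) < n := by exact_mod_cast hn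
  have hexp : (n : ℝ) ^ ((k : ℝ) * α - 1) * dRB α n ^ (k - 1) =
      (n : ℝ) ^ ((2 * k - 1) * α - 1) := by
    rw [dRB, ← rpow_natCast, ← rpow_mul hn'.le, ← rpow_add hn', Nat.cast_sub hk]
    push_cast
    ring_nf
  rw [div_mul_eq_mul_div, div_lt_iff₀ hlam] at h
  have hd : 0 < dRB α n := rpow_pos_of_pos hn' α
  rw [eta1Excess, div_pow, div_div, mul_div_assoc', div_le_div_iff₀ (by positivity) (by positivity),
    mul_assoc lam, hexp]
  linarith

lemma eventually_derivMajorant_eta1_neg (hα : 0 < α) (hk : 1 ≤ k)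
    (hkα : k * α ≤ 1) (hkα' : 1 < (2 * k - 1) * α) (hlam : 0 < lam) (hmu0 : 0 ≤ mu) :
    ∀ᶠ n : ℕ in atTop, derivMajorant α mu k n (eta1 α lam k n) < 0 := by
  filter_upwards [eventually_gt_atTop 0, (tendsto_dRB_atTop hα).eventually_ge_atTop 1,
    eventually_eta1Excess_mem_Ioc hα hkα hlam,
    eventually_two_div_lt_eta1Excess hα (Nat.one_le_iff_ne_zero.1 hk) hlam,
    eventually_mul_log_mul_two_div_pow_le_eta1Excess hα hk hkα' hlam] with n hn hd hu h2n hpow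
  exact derivMajorant_eta1_neg hn hd hmu0 hu.1 hu.2 h2n hpow

end Eta1

theorem stmt6_general (α p r lam mu η₂ : ℝ) (k : ℕ) (hα : 0 < α) (hk : 2 ≤ k)
    (hp0 : 0 < p) (hp1 : p < 1) (hr0 : 0 < r)
    (hkα : (k : ℝ) * α ≤ 1) (hkα2 : (2 * (k : ℝ) - 1) * α > 1)
    (hlam : 0 < lam) (hmu : mu > (k : ℝ) * p * r / (1 - p))
    (hη₂1 : η₂ < 1)
    (hη₂ : ((2 * (k : ℝ) - 1) * α - 1) / (2 * ((k : ℝ) - 1) * α) - mu * η₂ ^ (k - 1) > 0) :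
    (∀ n : ℕ, 2 ≤ n → ∀ S : ℕ, 1 ≤ S → S ≤ n →
        PhiC α p r k n (S : ℝ) = PhiRB α p r k n S) ∧
      ∀ᶠ n : ℕ in Filter.atTop,
        ∀ z ∈ Set.Ioo ((n : ℝ) * eta1 α lam k n) ((n : ℝ) * η₂),
          deriv (PhiC α p r k n) z < 0 := by
  refine ⟨fun n _ S _ hSn => PhiC_natCast hSn, ?_⟩
  have hmu0 : 0 ≤ mu := (div_nonneg (by positivity) (by linarith)).trans hmu.le
  -- the threshold in `hη₂` is at most `1 / 2` exactly because `k α ≤ 1`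
  have hμη₂ : mu * η₂ ^ (k - 1) < 1 := by
    have : ((2 * (k : ℝ) - 1) * α - 1) / (2 * ((k : ℝ) - 1) * α) ≤ 1 / 2 := by
      rw [div_le_iff₀ (by nlinarith)]; nlinarith
    linarith
  filter_upwards [(tendsto_dRB_atTop hα).eventually_ge_atTop 2,
    eventually_div_one_sub_dRB_rpow_le hα (Nat.ne_zero_of_lt hk) hmu,
    eventually_derivMajorant_eta1_neg hα (by omega) hkα hkα2 hlam hmu0,
    eventually_derivMajorant_neg hα hμη₂] with n hd hcoef hQ₁ hQ₂ z hz
  exact deriv_PhiC_neg hp0.le hp1 hr0.le hmu0 hd hcoef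
    (one_div_dRB_le_eta1 hlam.le (by linarith)) hη₂1.le hQ₁ hQ₂ hz

/-- Φ_c agrees with Φ_n at integers 1,…,n, and for large n,
Φ_c′(z) < 0 on (nη₁, nη₂). -/
theorem stmt6 (α p r τ lam mu η₂ : ℝ) (k : ℕ) (hα : 0 < α) (hk : 2 ≤ k)
    (hp0 : 0 < p) (hp1 : p < 1) (hτ : τ = 1 / (1 - p)) (hr0 : 0 < r)
    (hkα : (k : ℝ) * α ≤ 1) (hkα2 : (2 * (k : ℝ) - 1) * α > 1)
    (hlam : 0 < lam) (hmu : mu > (k : ℝ) * p * r / (1 - p))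
    (hη₂0 : 0 < η₂) (hη₂1 : η₂ < 1)
    (hη₂ : ((2 * (k : ℝ) - 1) * α - 1) / (2 * ((k : ℝ) - 1) * α) - mu * η₂ ^ (k - 1) > 0) :
    (∀ n : ℕ, 2 ≤ n → ∀ S : ℕ, 1 ≤ S → S ≤ n →
        PhiC α p r k n (S : ℝ) = PhiRB α p r k n S) ∧
      ∀ᶠ n : ℕ in Filter.atTop,
        ∀ z ∈ Set.Ioo ((n : ℝ) * eta1 α lam k n) ((n : ℝ) * η₂),
          deriv (PhiC α p r k n) z < 0 :=
  stmt6_general α p r lam mu η₂ k hα hk hp0 hp1 hr0 hkα hkα2 hlam hmu hη₂1 hη₂
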